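/- If P ⊆ D^V is a totally uniform finite relation, then for any sets Z, Y ⊆ V the degree deg_P(Y | Z=f0) := |{Π_Y(f) : f ∈ P, Π_Z(f)=f0}| does not depend on the choice of f0 ∈ Π_Z(P), and it equals |Π_{Z∪Y}(P)| / |Π_Z(P)|; moreover, the entropy of the uniform distribution on P satisfies h(Y|Z) = log(deg_P(Y|Z)). -/

import Mathlib

open Finset

/-- Shannon entropy (base 2) of the pushforward of `p` along `f`. -/
noncomputable def mEntropy {Ω α : Type*} [Fintype Ω] [DecidableEq α]
    (p : Ω → ℝ) (f : Ω → α) : ℝ :=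
  ∑ a ∈ Finset.univ.image f,
    Real.negMulLog (∑ ω ∈ Finset.univ.filter (fun ω => f ω = a), p ω) / Real.log 2

/-- Restriction of a tuple to the attributes in `Z`. -/
def restr {ι D : Type*} (f : ι → D) (Z : Finset ι) : {v // v ∈ Z} → D := fun v => f v.1

/-- Projection of a relation onto the attribute set `Z`. -/
def proj {ι D : Type*} [Fintype ι] [DecidableEq ι] [DecidableEq D]
    (P : Finset (ι → D)) (Z : Finset ι) : Finset ({v // v ∈ Z} → D) :=
  P.image (fun f => restr f Z)

/-- A relation is totally uniform if every marginal of the uniform distribution on it is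
uniform, i.e. all fibers of every projection have the same size `|P| / |Π_Z(P)|`. -/
def TotallyUniform {ι D : Type*} [Fintype ι] [DecidableEq ι] [DecidableEq D]
    (P : Finset (ι → D)) : Prop :=
  ∀ (Z : Finset ι) (g : {v // v ∈ Z} → D), g ∈ proj P Z →
    (P.filter (fun f => restr f Z = g)).card * (proj P Z).card = P.card

/-- The entropy function of (the uniform distribution on) a relation `P`. -/
noncomputable def relEntropy {ι D : Type*} [Fintype ι] [DecidableEq ι] [DecidableEq D]
    (P : Finset (ι → D)) (X : Finset ι) : ℝ :=
  mEntropy (fun _ : ↥P => (P.card : ℝ)⁻¹) (fun f => restr f.1 X)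

section Aux

variable {ι D : Type*} [Fintype ι] [DecidableEq ι] [DecidableEq D]

lemma proj_card_pos (P : Finset (ι → D)) (hP : P.Nonempty) (X : Finset ι) :
    0 < (proj P X).card :=
  Finset.card_pos.2 (hP.image _)

lemma deg_eq (P : Finset (ι → D)) (hP : P.Nonempty) (hu : TotallyUniform P)
    (Z Y : Finset ι) (f0 : {v // v ∈ Z} → D) (hf0 : f0 ∈ proj P Z) :
    ((P.filter (fun f => restr f Z = f0)).image (fun f => restr f Y)).card *
      (proj P Z).card = (proj P (Z ∪ Y)).card := by
  classical
  set Q := P.filter (fun f => restr f Z = f0) with hQdef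
  have hQZ : ∀ f ∈ Q, restr f Z = f0 := fun f hf => (Finset.mem_filter.1 hf).2
  have hQP : ∀ f ∈ Q, f ∈ P := fun f hf => (Finset.mem_filter.1 hf).1
  -- step 1: images under restr Y and restr (Z ∪ Y) have the same card
  set φ : ({v // v ∈ Z ∪ Y} → D) → ({v // v ∈ Y} → D) :=
    fun g v => g ⟨v.1, Finset.mem_union_right _ v.2⟩ with hφ
  have himg : Q.image (fun f => restr f Y) = (Q.image (fun f => restr f (Z ∪ Y))).image φ := by
    rw [Finset.image_image]
    rfl
  have h1 : (Q.image (fun f => restr f Y)).card = (Q.image (fun f => restr f (Z ∪ Y))).card := by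
    rw [himg]
    apply Finset.card_image_of_injOn
    intro g1 hg1 g2 hg2 hphi
    obtain ⟨f1, hf1, rfl⟩ := Finset.mem_image.1 hg1
    obtain ⟨f2, hf2, rfl⟩ := Finset.mem_image.1 hg2
    funext v
    rcases Finset.mem_union.1 v.2 with hv | hv
    · have e1 : f1 v.1 = f0 ⟨v.1, hv⟩ := congrFun (hQZ f1 hf1) ⟨v.1, hv⟩
      have e2 : f2 v.1 = f0 ⟨v.1, hv⟩ := congrFun (hQZ f2 hf2) ⟨v.1, hv⟩
      exact e1.trans e2.symm
    · exact congrFun hphi ⟨v.1, hv⟩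
  -- step 2: fibers within Q over restr (Z ∪ Y) are fibers within P
  have hfib : ∀ g ∈ Q.image (fun f => restr f (Z ∪ Y)),
      Q.filter (fun f => restr f (Z ∪ Y) = g) = P.filter (fun f => restr f (Z ∪ Y) = g) := by
    intro g hg
    obtain ⟨f', hf', rfl⟩ := Finset.mem_image.1 hg
    ext f
    constructor
    · intro hf
      have h1 := Finset.mem_filter.1 hf
      exact Finset.mem_filter.2 ⟨hQP f h1.1, h1.2⟩
    · intro hf
      have h1 := Finset.mem_filter.1 hf
      refine Finset.mem_filter.2 ⟨Finset.mem_filter.2 ⟨h1.1, ?_⟩, h1.2⟩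
      funext v
      have hv : f v.1 = f' v.1 := congrFun h1.2 ⟨v.1, Finset.mem_union_left _ v.2⟩
      rw [show restr f Z v = f v.1 from rfl, hv]
      exact congrFun (hQZ f' hf') v
  -- counting
  have hQcount : Q.card = ∑ g ∈ Q.image (fun f => restr f (Z ∪ Y)),
      (Q.filter (fun f => restr f (Z ∪ Y) = g)).card :=
    Finset.card_eq_sum_card_image _ _
  have hmem : ∀ g ∈ Q.image (fun f => restr f (Z ∪ Y)), g ∈ proj P (Z ∪ Y) := by
    intro g hg
    obtain ⟨f', hf', rfl⟩ := Finset.mem_image.1 hg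
    exact Finset.mem_image_of_mem _ (hQP f' hf')
  have key : Q.card * (proj P (Z ∪ Y)).card =
      (Q.image (fun f => restr f (Z ∪ Y))).card * P.card := by
    have step : ∑ g ∈ Q.image (fun f => restr f (Z ∪ Y)),
        (Q.filter (fun f => restr f (Z ∪ Y) = g)).card * (proj P (Z ∪ Y)).card
        = ∑ _g ∈ Q.image (fun f => restr f (Z ∪ Y)), P.card :=
      Finset.sum_congr rfl (fun g hg => by rw [hfib g hg]; exact hu (Z ∪ Y) g (hmem g hg))
    rw [hQcount, Finset.sum_mul, step, Finset.sum_const, smul_eq_mul]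
  have hQZcard : Q.card * (proj P Z).card = P.card := hu Z f0 hf0
  have hPpos : 0 < P.card := Finset.card_pos.2 hP
  -- combine
  apply Nat.eq_of_mul_eq_mul_right hPpos
  rw [h1]
  calc (Q.image (fun f => restr f (Z ∪ Y))).card * (proj P Z).card * P.card
      = (Q.image (fun f => restr f (Z ∪ Y))).card * P.card * (proj P Z).card := by ring
    _ = Q.card * (proj P (Z ∪ Y)).card * (proj P Z).card := by rw [key]
    _ = Q.card * (proj P Z).card * (proj P (Z ∪ Y)).card := by ring
    _ = P.card * (proj P (Z ∪ Y)).card := by rw [hQZcard]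
    _ = (proj P (Z ∪ Y)).card * P.card := by ring

lemma relEntropy_eq (P : Finset (ι → D)) (hP : P.Nonempty) (hu : TotallyUniform P)
    (X : Finset ι) : relEntropy P X = Real.logb 2 ((proj P X).card : ℝ) := by
  classical
  have hPpos : 0 < P.card := Finset.card_pos.2 hP
  have hMpos : 0 < (proj P X).card := proj_card_pos P hP X
  have himg : (Finset.univ.image (fun f : ↥P => restr f.1 X)) = proj P X := by
    ext a
    simp [proj, Finset.mem_image, Subtype.exists]
  have hcard : ∀ a, ((Finset.univ : Finset ↥P).filter (fun ω => restr ω.1 X = a)).card =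
      (P.filter (fun f => restr f X = a)).card := by
    intro a
    apply Finset.card_bij (fun ω _ => ω.1)
    · intro ω hω
      simp only [Finset.mem_filter, Finset.mem_univ, true_and] at hω
      exact Finset.mem_filter.2 ⟨ω.2, hω⟩
    · intro a1 _ a2 _ h; exact Subtype.ext h
    · intro b hb
      simp only [Finset.mem_filter] at hb
      exact ⟨⟨b, hb.1⟩, by simp [hb.2], rfl⟩
  unfold relEntropy mEntropy
  rw [himg]
  have hsum : ∀ a ∈ proj P X,
      (∑ ω ∈ Finset.univ.filter (fun ω : ↥P => restr ω.1 X = a), (P.card : ℝ)⁻¹)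
        = ((proj P X).card : ℝ)⁻¹ := by
    intro a ha
    have hc : ((P.filter (fun f => restr f X = a)).card : ℝ) * ((proj P X).card : ℝ)
        = (P.card : ℝ) := by exact_mod_cast hu X a ha
    have hP0 : (P.card : ℝ) ≠ 0 := (Nat.cast_pos.2 hPpos).ne'
    have hM0 : ((proj P X).card : ℝ) ≠ 0 := (Nat.cast_pos.2 hMpos).ne'
    rw [Finset.sum_const, nsmul_eq_mul, hcard a]
    field_simp
    linarith [hc]
  rw [Finset.sum_congr rfl (fun a ha => by rw [hsum a ha])]
  rw [Finset.sum_const, nsmul_eq_mul]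
  rw [Real.negMulLog, Real.log_inv]
  rw [Real.logb]
  field_simp

end Aux

theorem totally_uniform_degrees {ι D : Type*} [Fintype ι] [DecidableEq ι] [DecidableEq D]
    (P : Finset (ι → D)) (hP : P.Nonempty) (hu : TotallyUniform P) (Z Y : Finset ι) :
    (∀ f0 ∈ proj P Z, ∀ f1 ∈ proj P Z,
        ((P.filter (fun f => restr f Z = f0)).image (fun f => restr f Y)).card =
        ((P.filter (fun f => restr f Z = f1)).image (fun f => restr f Y)).card) ∧
    (∀ f0 ∈ proj P Z,
        ((P.filter (fun f => restr f Z = f0)).image (fun f => restr f Y)).card *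
          (proj P Z).card = (proj P (Z ∪ Y)).card) ∧
    relEntropy P (Z ∪ Y) - relEntropy P Z =
      Real.logb 2 (((proj P (Z ∪ Y)).card : ℝ) / ((proj P Z).card : ℝ)) := by
  have hZpos : 0 < (proj P Z).card := proj_card_pos P hP Z
  refine ⟨?_, ?_, ?_⟩
  · intro f0 hf0 f1 hf1
    have e0 := deg_eq P hP hu Z Y f0 hf0
    have e1 := deg_eq P hP hu Z Y f1 hf1
    exact Nat.eq_of_mul_eq_mul_right hZpos (e0.trans e1.symm)
  · intro f0 hf0
    exact deg_eq P hP hu Z Y f0 hf0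
  · rw [relEntropy_eq P hP hu, relEntropy_eq P hP hu]
    rw [Real.logb_div (Nat.cast_pos.2 (proj_card_pos P hP (Z ∪ Y))).ne'
      (Nat.cast_pos.2 hZpos).ne']
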